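/- arXiv:2508.14382 — 2 statements merged into one kernel-verified Lean document; each statement's English description precedes it below -/
import Mathlib

section
/- Let X be a D×D Hermitian matrix and define L_X(U) = log tr[exp(M(UXU†))], where M(Y)_{ij} = |Y_{ij}| for i≠j and M(Y)_{ii} = −Y_{ii}. Then L_X is Lipschitz on the unitary group with constant 2‖X‖_op with respect to the Frobenius norm: |L_X(U) − L_X(V)| ≤ 2‖X‖_op ‖U − V‖_F for all unitaries U, V. -/
open Matrix

/-- The Frobenius norm of a complex matrix. -/
noncomputable def frobNorm {D : ℕ} (A : Matrix (Fin D) (Fin D) ℂ) : ℝ :=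
  Real.sqrt (∑ i : Fin D, ∑ j : Fin D, ‖A i j‖ ^ 2)

/-- The operator (spectral) norm of a complex matrix. -/
noncomputable def opNorm {D : ℕ} (A : Matrix (Fin D) (Fin D) ℂ) : ℝ :=
  ‖Matrix.toEuclideanCLM (𝕜 := ℂ) A‖

/-- The map `M` replacing off-diagonal entries by their absolute values and
negating diagonal entries. -/
noncomputable def offAbsNegDiag {D : ℕ} (Y : Matrix (Fin D) (Fin D) ℂ) :
    Matrix (Fin D) (Fin D) ℂ :=
  Matrix.of fun i j => if i = j then -(Y i i) else (‖Y i j‖ : ℂ)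

section Aux

variable {D : ℕ}

lemma frobNorm_nonneg (A : Matrix (Fin D) (Fin D) ℂ) : 0 ≤ frobNorm A :=
  Real.sqrt_nonneg _

lemma sq_frobNorm (A : Matrix (Fin D) (Fin D) ℂ) :
    frobNorm A ^ 2 = ∑ i : Fin D, ∑ j : Fin D, ‖A i j‖ ^ 2 := by
  rw [frobNorm, Real.sq_sqrt]
  positivity

lemma frobNorm_mono {A B : Matrix (Fin D) (Fin D) ℂ}
    (h : ∀ i j, ‖A i j‖ ≤ ‖B i j‖) : frobNorm A ≤ frobNorm B := by
  apply Real.sqrt_le_sqrt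
  apply Finset.sum_le_sum
  intro i _
  apply Finset.sum_le_sum
  intro j _
  have := h i j
  have h0 : (0:ℝ) ≤ ‖A i j‖ := norm_nonneg _
  nlinarith

lemma frobNorm_conjTranspose (A : Matrix (Fin D) (Fin D) ℂ) :
    frobNorm Aᴴ = frobNorm A := by
  unfold frobNorm
  rw [Finset.sum_comm]
  simp [conjTranspose_apply]

lemma frobNorm_eq_norm (A : Matrix (Fin D) (Fin D) ℂ) :
    frobNorm A = ‖((WithLp.equiv 2 (Fin D × Fin D → ℂ)).symm (fun p => A p.1 p.2) :
      EuclideanSpace ℂ (Fin D × Fin D))‖ := by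
  rw [EuclideanSpace.norm_eq, frobNorm, Fintype.sum_prod_type]
  rfl

lemma frobNorm_triangle (A B : Matrix (Fin D) (Fin D) ℂ) :
    frobNorm (A + B) ≤ frobNorm A + frobNorm B := by
  rw [frobNorm_eq_norm, frobNorm_eq_norm, frobNorm_eq_norm]
  have : ((WithLp.equiv 2 (Fin D × Fin D → ℂ)).symm (fun p => (A + B) p.1 p.2) :
      EuclideanSpace ℂ (Fin D × Fin D)) =
      ((WithLp.equiv 2 (Fin D × Fin D → ℂ)).symm (fun p => A p.1 p.2) :
      EuclideanSpace ℂ (Fin D × Fin D)) +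
      ((WithLp.equiv 2 (Fin D × Fin D → ℂ)).symm (fun p => B p.1 p.2) :
      EuclideanSpace ℂ (Fin D × Fin D)) := by
    ext p
    simp [Matrix.add_apply]
  rw [this]
  exact norm_add_le _ _

/-- column as Euclidean vector -/
noncomputable def ecol (M : Matrix (Fin D) (Fin D) ℂ) (j : Fin D) :
    EuclideanSpace ℂ (Fin D) :=
  (WithLp.equiv 2 (Fin D → ℂ)).symm (fun i => M i j)

lemma sq_norm_ecol (M : Matrix (Fin D) (Fin D) ℂ) (j : Fin D) :
    ‖ecol M j‖ ^ 2 = ∑ i : Fin D, ‖M i j‖ ^ 2 := by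
  rw [EuclideanSpace.norm_eq, Real.sq_sqrt]
  · rfl
  · positivity

lemma sq_frobNorm_col (M : Matrix (Fin D) (Fin D) ℂ) :
    frobNorm M ^ 2 = ∑ j : Fin D, ‖ecol M j‖ ^ 2 :=
  calc frobNorm M ^ 2 = ∑ i : Fin D, ∑ j : Fin D, ‖M i j‖ ^ 2 := sq_frobNorm M
    _ = ∑ j : Fin D, ∑ i : Fin D, ‖M i j‖ ^ 2 := Finset.sum_comm
    _ = ∑ j : Fin D, ‖ecol M j‖ ^ 2 := by simp [sq_norm_ecol]

lemma frobNorm_mul_le (A B : Matrix (Fin D) (Fin D) ℂ) :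
    frobNorm (A * B) ≤ opNorm A * frobNorm B := by
  have hcol : ∀ j, ‖ecol (A * B) j‖ ≤ opNorm A * ‖ecol B j‖ := by
    intro j
    have h1 : ecol (A * B) j = Matrix.toEuclideanCLM (𝕜 := ℂ) A (ecol B j) := by
      simp only [ecol]
      rw [WithLp.equiv_symm_apply, Matrix.toEuclideanCLM_toLp]
      congr 1
    rw [h1]
    exact (Matrix.toEuclideanCLM (𝕜 := ℂ) A).le_opNorm _
  have hsq : frobNorm (A * B) ^ 2 ≤ (opNorm A * frobNorm B) ^ 2 := by
    rw [sq_frobNorm_col, mul_pow, sq_frobNorm_col, Finset.mul_sum]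
    apply Finset.sum_le_sum
    intro j _
    rw [← mul_pow]
    have h2 := hcol j
    have h3 : (0:ℝ) ≤ ‖ecol (A * B) j‖ := norm_nonneg _
    nlinarith
  calc frobNorm (A * B) = Real.sqrt (frobNorm (A * B) ^ 2) :=
        (Real.sqrt_sq (frobNorm_nonneg _)).symm
    _ ≤ Real.sqrt ((opNorm A * frobNorm B) ^ 2) := Real.sqrt_le_sqrt hsq
    _ = opNorm A * frobNorm B := by
        rw [Real.sqrt_sq]
        have := frobNorm_nonneg B
        have : (0:ℝ) ≤ opNorm A := norm_nonneg _
        positivity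

lemma opNorm_mul_le (A B : Matrix (Fin D) (Fin D) ℂ) :
    opNorm (A * B) ≤ opNorm A * opNorm B := by
  rw [opNorm, opNorm, opNorm, _root_.map_mul]
  exact norm_mul_le _ _

lemma opNorm_unitary_le {U : Matrix (Fin D) (Fin D) ℂ}
    (hU : U ∈ Matrix.unitaryGroup (Fin D) ℂ) : opNorm U ≤ 1 := by
  have h1 : star U * U = 1 := Matrix.mem_unitaryGroup_iff'.mp hU
  have h2 : star (Matrix.toEuclideanCLM (𝕜 := ℂ) U) * Matrix.toEuclideanCLM (𝕜 := ℂ) U = 1 := by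
    rw [← map_star, ← _root_.map_mul, h1, _root_.map_one]
  have h3 := CStarRing.norm_star_mul_self (x := Matrix.toEuclideanCLM (𝕜 := ℂ) U)
  rw [h2] at h3
  have h4 : ‖(1 : EuclideanSpace ℂ (Fin D) →L[ℂ] EuclideanSpace ℂ (Fin D))‖ ≤ 1 :=
    ContinuousLinearMap.norm_id_le
  rw [opNorm]
  have h5 : (0:ℝ) ≤ ‖Matrix.toEuclideanCLM (𝕜 := ℂ) U‖ := norm_nonneg _
  nlinarith [h3, h4]

end Aux


section Spectral

variable {D : ℕ}

lemma star_mul_self_re (z : ℂ) : ((starRingEnd ℂ) z * z).re = ‖z‖ ^ 2 := by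
  have h1 : (starRingEnd ℂ) z * z = ((Complex.normSq z : ℝ) : ℂ) := by
    rw [← Complex.mul_conj]; ring
  rw [h1, Complex.ofReal_re, Complex.normSq_eq_norm_sq]

open NormedSpace in
lemma exp_hermitian {A : Matrix (Fin D) (Fin D) ℂ} (hA : A.IsHermitian) :
    NormedSpace.exp A = (hA.eigenvectorUnitary : Matrix (Fin D) (Fin D) ℂ) *
      diagonal (fun i => ((Real.exp (hA.eigenvalues i) : ℝ) : ℂ)) *
      star (hA.eigenvectorUnitary : Matrix (Fin D) (Fin D) ℂ) := by
  have hW1 : star (hA.eigenvectorUnitary : Matrix (Fin D) (Fin D) ℂ) *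
      (hA.eigenvectorUnitary : Matrix (Fin D) (Fin D) ℂ) = 1 :=
    Matrix.mem_unitaryGroup_iff'.mp hA.eigenvectorUnitary.2
  have hW2 : (hA.eigenvectorUnitary : Matrix (Fin D) (Fin D) ℂ) *
      star (hA.eigenvectorUnitary : Matrix (Fin D) (Fin D) ℂ) = 1 :=
    Matrix.mem_unitaryGroup_iff.mp hA.eigenvectorUnitary.2
  have hinv : (hA.eigenvectorUnitary : Matrix (Fin D) (Fin D) ℂ)⁻¹ =
      star (hA.eigenvectorUnitary : Matrix (Fin D) (Fin D) ℂ) := Matrix.inv_eq_left_inv hW1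
  have hunit : IsUnit (hA.eigenvectorUnitary : Matrix (Fin D) (Fin D) ℂ) :=
    ⟨⟨_, _, hW2, hW1⟩, rfl⟩
  conv_lhs => rw [hA.spectral_theorem, Unitary.conjStarAlgAut_apply, ← hinv]
  rw [Matrix.exp_conj _ _ hunit, hinv]
  congr 1
  rw [Matrix.exp_diagonal]
  have hfun : (NormedSpace.exp (RCLike.ofReal ∘ hA.eigenvalues : Fin D → ℂ)) =
      fun i => ((Real.exp (hA.eigenvalues i) : ℝ) : ℂ) := by
    funext i
    rw [Pi.exp_def]
    show NormedSpace.exp ((hA.eigenvalues i : ℝ) : ℂ) = _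
    rw [← Complex.exp_eq_exp_ℂ, ← Complex.ofReal_exp]
  rw [hfun]

lemma trace_exp_re {A : Matrix (Fin D) (Fin D) ℂ} (hA : A.IsHermitian) :
    (NormedSpace.exp A).trace.re = ∑ i : Fin D, Real.exp (hA.eigenvalues i) := by
  rw [exp_hermitian hA, Matrix.trace_mul_cycle,
    Matrix.mem_unitaryGroup_iff'.mp hA.eigenvectorUnitary.2, Matrix.one_mul,
    Matrix.trace_diagonal, Complex.re_sum]
  exact Finset.sum_congr rfl fun i _ => Complex.ofReal_re _

lemma conj_mul_re (z : ℂ) (r : ℝ) :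
    ((starRingEnd ℂ) z * (r : ℂ) * z).re = r * ‖z‖ ^ 2 := by
  have h1 : (starRingEnd ℂ) z * (r : ℂ) * z = (r : ℂ) * ((Complex.normSq z : ℝ) : ℂ) := by
    rw [← Complex.mul_conj]; ring
  rw [h1, ← Complex.ofReal_mul, Complex.ofReal_re, Complex.normSq_eq_norm_sq]

lemma conj_diag_entry (C : Matrix (Fin D) (Fin D) ℂ) (v : Fin D → ℝ) (i : Fin D) :
    ((star C * diagonal (fun j => ((v j : ℝ) : ℂ)) * C) i i).re
      = ∑ j : Fin D, v j * ‖C j i‖ ^ 2 := by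
  rw [Matrix.mul_apply, Complex.re_sum]
  apply Finset.sum_congr rfl
  intro k _
  rw [Matrix.mul_diagonal, Matrix.star_apply]
  exact conj_mul_re (C k i) (v k)

lemma unitary_col_norm {W : Matrix (Fin D) (Fin D) ℂ}
    (hW : W ∈ Matrix.unitaryGroup (Fin D) ℂ) (i : Fin D) :
    ∑ k : Fin D, ‖W k i‖ ^ 2 = 1 := by
  have h1 : star W * W = 1 := Matrix.mem_unitaryGroup_iff'.mp hW
  have h2 : ((star W * W) i i).re = 1 := by rw [h1]; simp
  rw [Matrix.mul_apply, Complex.re_sum] at h2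
  rw [← h2]
  apply Finset.sum_congr rfl
  intro k _
  rw [Matrix.star_apply, Complex.star_def, star_mul_self_re]

lemma diag_entry_bound {W : Matrix (Fin D) (Fin D) ℂ}
    (hW : W ∈ Matrix.unitaryGroup (Fin D) ℂ)
    (M : Matrix (Fin D) (Fin D) ℂ) (i : Fin D) :
    |((star W * M * W) i i).re| ≤ frobNorm M := by
  have habs : |((star W * M * W) i i).re| ≤
      ∑ p : Fin D × Fin D, (‖W p.1 i‖ * ‖W p.2 i‖) * ‖M p.1 p.2‖ := by
    calc |((star W * M * W) i i).re| ≤ ‖(star W * M * W) i i‖ := Complex.abs_re_le_norm _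
      _ = ‖∑ l : Fin D, (∑ k : Fin D, (starRingEnd ℂ) (W k i) * M k l) * W l i‖ := by
          simp only [Matrix.mul_apply, Matrix.star_apply, Complex.star_def]
      _ ≤ ∑ l : Fin D, ‖(∑ k : Fin D, (starRingEnd ℂ) (W k i) * M k l) * W l i‖ :=
          norm_sum_le _ _
      _ ≤ ∑ l : Fin D, ∑ k : Fin D, (‖W k i‖ * ‖W l i‖) * ‖M k l‖ := by
          apply Finset.sum_le_sum
          intro l _
          rw [norm_mul]
          calc ‖∑ k : Fin D, (starRingEnd ℂ) (W k i) * M k l‖ * ‖W l i‖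
              ≤ (∑ k : Fin D, ‖(starRingEnd ℂ) (W k i) * M k l‖) * ‖W l i‖ := by
                apply mul_le_mul_of_nonneg_right (norm_sum_le _ _) (norm_nonneg _)
            _ = ∑ k : Fin D, (‖W k i‖ * ‖W l i‖) * ‖M k l‖ := by
                rw [Finset.sum_mul]
                apply Finset.sum_congr rfl
                intro k _
                rw [norm_mul, RingHomIsometric.norm_map]
                ring
      _ = ∑ p : Fin D × Fin D, (‖W p.1 i‖ * ‖W p.2 i‖) * ‖M p.1 p.2‖ := by
          rw [Fintype.sum_prod_type]
          exact Finset.sum_comm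
  have hCS := Finset.sum_mul_sq_le_sq_mul_sq Finset.univ
    (fun p : Fin D × Fin D => ‖W p.1 i‖ * ‖W p.2 i‖)
    (fun p : Fin D × Fin D => ‖M p.1 p.2‖)
  have hw : ∑ p : Fin D × Fin D, (‖W p.1 i‖ * ‖W p.2 i‖) ^ 2 = 1 := by
    rw [Fintype.sum_prod_type]
    have : ∀ k : Fin D, ∑ l : Fin D, (‖W k i‖ * ‖W l i‖) ^ 2
        = ‖W k i‖ ^ 2 * (∑ l : Fin D, ‖W l i‖ ^ 2) := by
      intro k
      rw [Finset.mul_sum]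
      apply Finset.sum_congr rfl
      intro l _
      ring
    simp_rw [this, unitary_col_norm hW i, mul_one]
    exact unitary_col_norm hW i
  have hm : ∑ p : Fin D × Fin D, ‖M p.1 p.2‖ ^ 2 = frobNorm M ^ 2 := by
    rw [sq_frobNorm, Fintype.sum_prod_type]
  rw [hw, hm, one_mul] at hCS
  have hS : (0:ℝ) ≤ ∑ p : Fin D × Fin D, (‖W p.1 i‖ * ‖W p.2 i‖) * ‖M p.1 p.2‖ := by
    apply Finset.sum_nonneg
    intro p _
    positivity
  have hfin : ∑ p : Fin D × Fin D, (‖W p.1 i‖ * ‖W p.2 i‖) * ‖M p.1 p.2‖ ≤ frobNorm M := by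
    nlinarith [frobNorm_nonneg M]
  linarith
  
lemma peierls {B W : Matrix (Fin D) (Fin D) ℂ} (hB : B.IsHermitian)
    (hW : W ∈ Matrix.unitaryGroup (Fin D) ℂ) :
    ∑ i : Fin D, Real.exp (((star W * B * W) i i).re) ≤ (NormedSpace.exp B).trace.re := by
  set P := (hB.eigenvectorUnitary : Matrix (Fin D) (Fin D) ℂ) with hPdef
  have hP1 : star P * P = 1 := Matrix.mem_unitaryGroup_iff'.mp hB.eigenvectorUnitary.2
  have hP2 : P * star P = 1 := Matrix.mem_unitaryGroup_iff.mp hB.eigenvectorUnitary.2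
  have hW1 : star W * W = 1 := Matrix.mem_unitaryGroup_iff'.mp hW
  have hW2 : W * star W = 1 := Matrix.mem_unitaryGroup_iff.mp hW
  set C := star P * W with hCdef
  have hsC : star C = star W * P := by rw [hCdef, Matrix.star_mul, star_star]
  have hCU : C ∈ Matrix.unitaryGroup (Fin D) ℂ := by
    rw [Matrix.mem_unitaryGroup_iff, hsC, hCdef]
    have h3 : W * (star W * P) = P := by rw [← Matrix.mul_assoc, hW2, Matrix.one_mul]
    rw [Matrix.mul_assoc, h3, hP1]
  set μ := hB.eigenvalues
  -- weights
  set w : Fin D → Fin D → ℝ := fun i j => ‖C j i‖ ^ 2 with hwdef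
  have hw0 : ∀ i j, 0 ≤ w i j := fun i j => by positivity
  have hw1 : ∀ i, ∑ j, w i j = 1 := fun i => unitary_col_norm hCU i
  -- B entry formula
  have hBentry : ∀ i, ((star W * B * W) i i).re = ∑ j, μ j * w i j := by
    intro i
    have h1 : star W * B * W = star C * diagonal (fun j => ((μ j : ℝ) : ℂ)) * C := by
      have hofr : (RCLike.ofReal ∘ hB.eigenvalues : Fin D → ℂ) = fun j => ((μ j : ℝ) : ℂ) := rfl
      conv_lhs => rw [hB.spectral_theorem, Unitary.conjStarAlgAut_apply]
      rw [hsC, hCdef, hofr]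
      simp only [Matrix.mul_assoc]
      rfl
    rw [h1, conj_diag_entry]
  -- trace formula
  have htr : (NormedSpace.exp B).trace.re = ∑ i, ∑ j, Real.exp (μ j) * w i j := by
    have h1 : (star W * NormedSpace.exp B * W).trace = (NormedSpace.exp B).trace := by
      rw [Matrix.trace_mul_cycle, hW2, Matrix.one_mul]
    have h2 : star W * NormedSpace.exp B * W
        = star C * diagonal (fun j => ((Real.exp (μ j) : ℝ) : ℂ)) * C := by
      rw [exp_hermitian hB, hsC, hCdef]
      simp only [Matrix.mul_assoc]
      rfl
    rw [← h1, h2, Matrix.trace, Complex.re_sum]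
    apply Finset.sum_congr rfl
    intro i _
    rw [Matrix.diag_apply, conj_diag_entry]
  rw [htr]
  apply Finset.sum_le_sum
  intro i _
  rw [hBentry i]
  have hj := convexOn_exp.map_sum_le (t := Finset.univ) (w := w i) (p := μ)
    (fun j _ => hw0 i j) (hw1 i) (fun j _ => Set.mem_univ _)
  calc Real.exp (∑ j, μ j * w i j) = Real.exp (∑ j, w i j • μ j) := by
        congr 1
        apply Finset.sum_congr rfl
        intro j _
        rw [smul_eq_mul]
        ring
    _ ≤ ∑ j, w i j • Real.exp (μ j) := hj
    _ = ∑ j, Real.exp (μ j) * w i j := by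
        apply Finset.sum_congr rfl
        intro j _
        rw [smul_eq_mul]
        ring

end Spectral


section Final

variable {D : ℕ}

lemma frobNorm_sub_comm (A B : Matrix (Fin D) (Fin D) ℂ) :
    frobNorm (A - B) = frobNorm (B - A) := by
  apply le_antisymm <;> apply frobNorm_mono <;> intro i j <;>
    simp only [Matrix.sub_apply] <;> rw [norm_sub_rev]

lemma offAbsNegDiag_hermitian {Y : Matrix (Fin D) (Fin D) ℂ} (hY : Y.IsHermitian) :
    (offAbsNegDiag Y).IsHermitian := by
  show (offAbsNegDiag Y)ᴴ = offAbsNegDiag Y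
  ext i j
  simp only [Matrix.conjTranspose_apply, offAbsNegDiag, Matrix.of_apply]
  by_cases h : i = j
  · subst h
    simp only [eq_self_iff_true, if_true]
    rw [star_neg]
    congr 1
    exact hY.apply i i
  · have h' : ¬ j = i := fun hji => h hji.symm
    rw [if_neg h', if_neg h]
    have h1 : star ((‖Y j i‖ : ℝ) : ℂ) = ((‖Y j i‖ : ℝ) : ℂ) := by
      rw [Complex.star_def, Complex.conj_ofReal]
    rw [h1]
    congr 1
    have h2 := hY.apply i j
    rw [← h2, norm_star]
    
lemma offAbsNegDiag_entry_bound (Y Y' : Matrix (Fin D) (Fin D) ℂ) (i j : Fin D) :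
    ‖(offAbsNegDiag Y - offAbsNegDiag Y') i j‖ ≤ ‖(Y - Y') i j‖ := by
  simp only [Matrix.sub_apply, offAbsNegDiag, Matrix.of_apply]
  by_cases h : i = j
  · subst h
    simp only [eq_self_iff_true, if_true]
    rw [show -Y i i - -Y' i i = -(Y i i - Y' i i) by ring, norm_neg]
  · rw [if_neg h, if_neg h, ← Complex.ofReal_sub]
    rw [Complex.norm_real, Real.norm_eq_abs]
    exact (abs_norm_sub_norm_le _ _).trans le_rfl

lemma conj_diff_bound {X U V : Matrix (Fin D) (Fin D) ℂ} (hX : X.IsHermitian)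
    (hU : U ∈ Matrix.unitaryGroup (Fin D) ℂ) (hV : V ∈ Matrix.unitaryGroup (Fin D) ℂ) :
    frobNorm (U * X * Uᴴ - V * X * Vᴴ) ≤ 2 * opNorm X * frobNorm (U - V) := by
  have hsplit : U * X * Uᴴ - V * X * Vᴴ = (U - V) * X * Uᴴ + V * X * (U - V)ᴴ := by
    rw [Matrix.conjTranspose_sub]
    noncomm_ring
  have hX0 : (0:ℝ) ≤ opNorm X := norm_nonneg _
  have hF0 : (0:ℝ) ≤ frobNorm ((U - V)ᴴ) := frobNorm_nonneg _
  have h1 : frobNorm ((U - V) * X * Uᴴ) ≤ opNorm X * frobNorm (U - V) := by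
    have e : (U - V) * X * Uᴴ = ((U * Xᴴ) * (U - V)ᴴ)ᴴ := by
      simp [Matrix.conjTranspose_mul, Matrix.mul_assoc]
    rw [e, frobNorm_conjTranspose]
    have hop : opNorm (U * Xᴴ) ≤ opNorm X :=
      (opNorm_mul_le U Xᴴ).trans (by
        rw [hX.eq]
        nlinarith [opNorm_unitary_le hU, hX0])
    calc frobNorm ((U * Xᴴ) * (U - V)ᴴ) ≤ opNorm (U * Xᴴ) * frobNorm ((U - V)ᴴ) :=
          frobNorm_mul_le _ _
      _ ≤ opNorm X * frobNorm ((U - V)ᴴ) := mul_le_mul_of_nonneg_right hop hF0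
      _ = opNorm X * frobNorm (U - V) := by rw [frobNorm_conjTranspose]
  have h2 : frobNorm (V * X * (U - V)ᴴ) ≤ opNorm X * frobNorm (U - V) := by
    have hop : opNorm (V * X) ≤ opNorm X :=
      (opNorm_mul_le V X).trans (by nlinarith [opNorm_unitary_le hV, hX0])
    calc frobNorm ((V * X) * (U - V)ᴴ) ≤ opNorm (V * X) * frobNorm ((U - V)ᴴ) :=
          frobNorm_mul_le _ _
      _ ≤ opNorm X * frobNorm ((U - V)ᴴ) := mul_le_mul_of_nonneg_right hop hF0
      _ = opNorm X * frobNorm (U - V) := by rw [frobNorm_conjTranspose]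
  calc frobNorm (U * X * Uᴴ - V * X * Vᴴ)
      = frobNorm ((U - V) * X * Uᴴ + V * X * (U - V)ᴴ) := by rw [hsplit]
    _ ≤ frobNorm ((U - V) * X * Uᴴ) + frobNorm (V * X * (U - V)ᴴ) := frobNorm_triangle _ _
    _ ≤ 2 * opNorm X * frobNorm (U - V) := by linarith

lemma log_trace_exp_sub_le (hD : 0 < D) {A B : Matrix (Fin D) (Fin D) ℂ}
    (hA : A.IsHermitian) (hB : B.IsHermitian) :
    Real.log ((NormedSpace.exp A).trace.re) - Real.log ((NormedSpace.exp B).trace.re)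
      ≤ frobNorm (A - B) := by
  have hne : Nonempty (Fin D) := Fin.pos_iff_nonempty.mp hD
  set c := frobNorm (A - B) with hc
  have hWu : (hA.eigenvectorUnitary : Matrix (Fin D) (Fin D) ℂ) ∈
      Matrix.unitaryGroup (Fin D) ℂ := hA.eigenvectorUnitary.2
  have hdiagA : ∀ i, (((star (hA.eigenvectorUnitary : Matrix (Fin D) (Fin D) ℂ)) * A *
      (hA.eigenvectorUnitary : Matrix (Fin D) (Fin D) ℂ)) i i).re = hA.eigenvalues i := by
    intro i
    have hsd := hA.conjStarAlgAut_star_eigenvectorUnitary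
    rw [Unitary.conjStarAlgAut_apply, Unitary.coe_star, star_star] at hsd
    rw [hsd]
    simp
  have hentry : ∀ i : Fin D, hA.eigenvalues i - c ≤
      (((star (hA.eigenvectorUnitary : Matrix (Fin D) (Fin D) ℂ)) * B *
      (hA.eigenvectorUnitary : Matrix (Fin D) (Fin D) ℂ)) i i).re := by
    intro i
    set W := (hA.eigenvectorUnitary : Matrix (Fin D) (Fin D) ℂ) with hWdef
    have e1 : star W * B * W = star W * A * W - star W * (A - B) * W := by
      noncomm_ring
    have e2 := diag_entry_bound hWu (A - B) i
    have e3 : ((star W * B * W) i i).re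
        = hA.eigenvalues i - ((star W * (A - B) * W) i i).re := by
      rw [e1, Matrix.sub_apply, Complex.sub_re, hdiagA]
    rw [e3]
    have h4 := (abs_le.mp e2).2
    linarith
  have hTB := peierls hB hWu
  have hTAval := trace_exp_re hA
  have h1 : Real.exp (-c) * (NormedSpace.exp A).trace.re
      ≤ (NormedSpace.exp B).trace.re := by
    rw [hTAval, Finset.mul_sum]
    calc ∑ i : Fin D, Real.exp (-c) * Real.exp (hA.eigenvalues i)
        = ∑ i : Fin D, Real.exp (hA.eigenvalues i - c) := by
          apply Finset.sum_congr rfl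
          intro i _
          rw [← Real.exp_add]
          ring_nf
      _ ≤ ∑ i : Fin D, Real.exp ((((star (hA.eigenvectorUnitary : Matrix (Fin D) (Fin D) ℂ))
            * B * (hA.eigenvectorUnitary : Matrix (Fin D) (Fin D) ℂ)) i i).re) := by
          apply Finset.sum_le_sum
          intro i _
          exact Real.exp_le_exp.mpr (hentry i)
      _ ≤ _ := hTB
  have hTApos : 0 < (NormedSpace.exp A).trace.re := by
    rw [hTAval]
    exact Finset.sum_pos (fun i _ => Real.exp_pos _) Finset.univ_nonempty
  have hTBpos : 0 < (NormedSpace.exp B).trace.re := by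
    rw [trace_exp_re hB]
    exact Finset.sum_pos (fun i _ => Real.exp_pos _) Finset.univ_nonempty
  have h2 : Real.log (Real.exp (-c) * (NormedSpace.exp A).trace.re)
      ≤ Real.log ((NormedSpace.exp B).trace.re) :=
    Real.log_le_log (by positivity) h1
  rw [Real.log_mul (Real.exp_ne_zero _) (ne_of_gt hTApos), Real.log_exp] at h2
  linarith

end Final

/-- `L_X(U) = log tr exp(M(U X U†))` is `2‖X‖_op`-Lipschitz on the unitary group
with respect to the Frobenius norm. -/
theorem LX_lipschitz
    (D : ℕ) (X : Matrix (Fin D) (Fin D) ℂ) (hX : X.IsHermitian)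
    (L : Matrix (Fin D) (Fin D) ℂ → ℝ)
    (hL : ∀ W, L W = Real.log ((NormedSpace.exp (offAbsNegDiag (W * X * Wᴴ))).trace.re))
    (U V : Matrix (Fin D) (Fin D) ℂ)
    (hU : U ∈ Matrix.unitaryGroup (Fin D) ℂ)
    (hV : V ∈ Matrix.unitaryGroup (Fin D) ℂ) :
    |L U - L V| ≤ 2 * opNorm X * frobNorm (U - V) := by
  rcases Nat.eq_zero_or_pos D with hD | hD
  · subst hD
    have hUV : U = V := by
      ext i j
      exact i.elim0
    rw [hUV, sub_self, abs_zero]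
    have h1 := frobNorm_nonneg (V - V)
    have h2 : (0:ℝ) ≤ opNorm X := norm_nonneg _
    nlinarith
  · have hYU : (U * X * Uᴴ).IsHermitian := Matrix.isHermitian_mul_mul_conjTranspose U hX
    have hYV : (V * X * Vᴴ).IsHermitian := Matrix.isHermitian_mul_mul_conjTranspose V hX
    have hA : (offAbsNegDiag (U * X * Uᴴ)).IsHermitian := offAbsNegDiag_hermitian hYU
    have hB : (offAbsNegDiag (V * X * Vᴴ)).IsHermitian := offAbsNegDiag_hermitian hYV
    have key1 := log_trace_exp_sub_le hD hA hB
    have key2 := log_trace_exp_sub_le hD hB hA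
    have hsymm : frobNorm (offAbsNegDiag (V * X * Vᴴ) - offAbsNegDiag (U * X * Uᴴ))
        = frobNorm (offAbsNegDiag (U * X * Uᴴ) - offAbsNegDiag (V * X * Vᴴ)) :=
      frobNorm_sub_comm _ _
    have hM : frobNorm (offAbsNegDiag (U * X * Uᴴ) - offAbsNegDiag (V * X * Vᴴ))
        ≤ frobNorm (U * X * Uᴴ - V * X * Vᴴ) :=
      frobNorm_mono (offAbsNegDiag_entry_bound _ _)
    have hT := conj_diff_bound hX hU hV
    rw [hL U, hL V, abs_sub_le_iff]
    rw [hsymm] at key2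
    constructor <;> linarith
end

section
/- Let M(H) = |H_off| − diag(H) where H is Hermitian, |H_off| is the entrywise absolute value of the off-diagonal part, and diag(H) is the diagonal part. Then the average sign at inverse temperature β = 1, defined as tr(e^{−H}) / tr(e^{M(H)}), satisfies 0 < tr(e^{−H})/tr(e^{M(H)}) ≤ 1; i.e., tr(e^{−H}) ≤ tr(e^{M(H)}). -/
open Matrix

set_option maxHeartbeats 1000000

attribute [local instance] Matrix.linftyOpSemiNormedRing Matrix.linftyOpNormedRing
  Matrix.linftyOpNormedAlgebra

lemma dom_mul {D : ℕ} {A A' B B' : Matrix (Fin D) (Fin D) ℂ}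
    (h : ∀ i j, ‖A i j‖ ≤ (B i j).re ∧ (B i j).im = 0)
    (h' : ∀ i j, ‖A' i j‖ ≤ (B' i j).re ∧ (B' i j).im = 0) :
    ∀ i j, ‖(A * A') i j‖ ≤ ((B * B') i j).re ∧ ((B * B') i j).im = 0 := by
  intro i j
  constructor
  · calc ‖(A * A') i j‖ = ‖∑ k, A i k * A' k j‖ := by rw [Matrix.mul_apply]
      _ ≤ ∑ k, ‖A i k * A' k j‖ := norm_sum_le _ _
      _ ≤ ∑ k, (B i k).re * (B' k j).re := by
          refine Finset.sum_le_sum fun k _ => ?_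
          rw [norm_mul]
          exact mul_le_mul (h i k).1 (h' k j).1 (norm_nonneg _)
            (le_trans (norm_nonneg _) (h i k).1)
      _ = ((B * B') i j).re := by
          rw [Matrix.mul_apply, Complex.re_sum]
          refine Finset.sum_congr rfl fun k _ => ?_
          rw [Complex.mul_re, (h i k).2, (h' k j).2]
          ring
  · rw [Matrix.mul_apply, Complex.im_sum]
    refine Finset.sum_eq_zero fun k _ => ?_
    rw [Complex.mul_im, (h i k).2, (h' k j).2]
    ring

lemma dom_pow {D : ℕ} {A B : Matrix (Fin D) (Fin D) ℂ}
    (h : ∀ i j, ‖A i j‖ ≤ (B i j).re ∧ (B i j).im = 0) (q : ℕ) :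
    ∀ i j, ‖(A ^ q) i j‖ ≤ ((B ^ q) i j).re ∧ ((B ^ q) i j).im = 0 := by
  induction q with
  | zero =>
    intro i j
    simp only [pow_zero]
    by_cases hij : i = j <;> simp [Matrix.one_apply, hij]
  | succ n ih =>
    rw [pow_succ, pow_succ]
    exact dom_mul ih h

noncomputable def reTrace (D : ℕ) : Matrix (Fin D) (Fin D) ℂ →L[ℝ] ℝ :=
  LinearMap.toContinuousLinearMap
    (Complex.reLm.comp ((Matrix.traceLinearMap (Fin D) ℂ ℂ).restrictScalars ℝ))

lemma reTrace_apply {D : ℕ} (X : Matrix (Fin D) (Fin D) ℂ) :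
    reTrace D X = X.trace.re := rfl

lemma trace_exp_re_eq_tsum {D : ℕ} (A : Matrix (Fin D) (Fin D) ℂ) :
    (NormedSpace.exp A).trace.re
      = ∑' n : ℕ, (n.factorial : ℝ)⁻¹ * ((A ^ n).trace).re := by
  rw [← reTrace_apply, NormedSpace.exp_eq_tsum ℂ,
    (reTrace D).map_tsum (NormedSpace.expSeries_summable' (𝕂 := ℂ) A)]
  refine tsum_congr fun n => ?_
  rw [reTrace_apply, Matrix.trace_smul, smul_eq_mul, Complex.mul_re]
  simp

lemma summable_reTrace_series {D : ℕ} (A : Matrix (Fin D) (Fin D) ℂ) :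
    Summable fun n : ℕ => (n.factorial : ℝ)⁻¹ * ((A ^ n).trace).re := by
  have := ((reTrace D).summable (NormedSpace.expSeries_summable' (𝕂 := ℂ) A))
  convert this using 2 with n
  rw [reTrace_apply, Matrix.trace_smul, smul_eq_mul, Complex.mul_re]
  simp

lemma trace_exp_re_le {D : ℕ} (A B : Matrix (Fin D) (Fin D) ℂ)
    (h : ∀ i j, ‖A i j‖ ≤ (B i j).re ∧ (B i j).im = 0) :
    (NormedSpace.exp A).trace.re ≤ (NormedSpace.exp B).trace.re := by
  rw [trace_exp_re_eq_tsum, trace_exp_re_eq_tsum]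
  refine Summable.tsum_le_tsum (fun n => ?_) (summable_reTrace_series A) (summable_reTrace_series B)
  have key : ((A ^ n).trace).re ≤ ((B ^ n).trace).re := by
    rw [Matrix.trace, Matrix.trace, Complex.re_sum, Complex.re_sum]
    refine Finset.sum_le_sum fun i _ => ?_
    calc ((A ^ n).diag i).re ≤ ‖(A ^ n) i i‖ := Complex.re_le_norm _
      _ ≤ ((B ^ n) i i).re := (dom_pow h n i i).1
  exact mul_le_mul_of_nonneg_left key (by positivity)

/-- Shifting by a real multiple of the identity rescales the trace of the exponential. -/
lemma trace_exp_shift {D : ℕ} (c : ℝ) (X : Matrix (Fin D) (Fin D) ℂ) :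
    (NormedSpace.exp ((c : ℂ) • (1 : Matrix (Fin D) (Fin D) ℂ) + X)).trace.re
      = Real.exp c * (NormedSpace.exp X).trace.re := by
  have hcomm : Commute ((c : ℂ) • (1 : Matrix (Fin D) (Fin D) ℂ)) X :=
    (Commute.one_left X).smul_left _
  rw [Matrix.exp_add_of_commute _ _ hcomm]
  have h1 : ((c : ℂ) • (1 : Matrix (Fin D) (Fin D) ℂ))
      = algebraMap ℂ (Matrix (Fin D) (Fin D) ℂ) (c : ℂ) :=
    (Algebra.algebraMap_eq_smul_one _).symm
  have h2 : NormedSpace.exp ((c : ℂ) • (1 : Matrix (Fin D) (Fin D) ℂ))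
      = Complex.exp (c : ℂ) • (1 : Matrix (Fin D) (Fin D) ℂ) := by
    rw [h1]; erw [← NormedSpace.algebraMap_exp_comm (𝔸 := Matrix (Fin D) (Fin D) ℂ) (c : ℂ)]; rw [← Complex.exp_eq_exp_ℂ,
      Algebra.algebraMap_eq_smul_one]
  rw [h2, smul_mul_assoc, one_mul, Matrix.trace_smul, smul_eq_mul,
    ← Complex.ofReal_exp, Complex.re_ofReal_mul]

/-- The key entrywise domination after shifting by `c = ∑ i, ‖H i i‖`. -/
lemma dom_shifted {D : ℕ} (H : Matrix (Fin D) (Fin D) ℂ) (hH : H.IsHermitian) :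
    ∀ i j, ‖((((∑ k, ‖H k k‖ : ℝ) : ℂ) • (1 : Matrix (Fin D) (Fin D) ℂ)) + (-H)) i j‖
        ≤ (((((∑ k, ‖H k k‖ : ℝ) : ℂ) • (1 : Matrix (Fin D) (Fin D) ℂ)) + offAbsNegDiag H) i j).re
      ∧ (((((∑ k, ‖H k k‖ : ℝ) : ℂ) • (1 : Matrix (Fin D) (Fin D) ℂ)) + offAbsNegDiag H) i j).im
          = 0 := by
  intro i j
  set c : ℝ := ∑ k, ‖H k k‖ with hc
  by_cases hij : i = j
  · subst hij
    have him : (H i i).im = 0 := by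
      have := hH.apply i i
      rw [RCLike.star_def, Complex.conj_eq_iff_im] at this
      exact this
    have hle : (H i i).re ≤ c := by
      calc (H i i).re ≤ ‖H i i‖ := Complex.re_le_norm _
        _ ≤ c := Finset.single_le_sum (fun k _ => norm_nonneg (H k k)) (Finset.mem_univ i)
    have hentry : ∀ X : Matrix (Fin D) (Fin D) ℂ,
        (((c : ℂ) • (1 : Matrix (Fin D) (Fin D) ℂ)) + X) i i = (c : ℂ) + X i i := by
      intro X
      simp [Matrix.add_apply, Matrix.smul_apply, Matrix.one_apply]
    have hA : (((c : ℂ) • (1 : Matrix (Fin D) (Fin D) ℂ)) + (-H)) i i = (c : ℂ) - H i i := by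
      rw [hentry]; ring_nf; simp [sub_eq_add_neg]
    have hB : (((c : ℂ) • (1 : Matrix (Fin D) (Fin D) ℂ)) + offAbsNegDiag H) i i
        = (c : ℂ) - H i i := by
      rw [hentry]
      simp [offAbsNegDiag, sub_eq_add_neg]
    have hval : (c : ℂ) - H i i = ((c - (H i i).re : ℝ) : ℂ) := by
      apply Complex.ext <;> simp [him]
    rw [hA, hB, hval]
    refine ⟨?_, by simp⟩
    rw [Complex.norm_real]
    simp only [Complex.ofReal_re]
    rw [Real.norm_eq_abs, abs_of_nonneg (by linarith)]
  · have hA : (((c : ℂ) • (1 : Matrix (Fin D) (Fin D) ℂ)) + (-H)) i j = -(H i j) := by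
      simp [Matrix.add_apply, Matrix.smul_apply, Matrix.one_apply, hij]
    have hB : (((c : ℂ) • (1 : Matrix (Fin D) (Fin D) ℂ)) + offAbsNegDiag H) i j
        = ((‖H i j‖ : ℝ) : ℂ) := by
      simp [Matrix.add_apply, Matrix.smul_apply, Matrix.one_apply, offAbsNegDiag, hij]
    rw [hA, hB]
    simp

/-- The average sign at inverse temperature `β = 1` satisfies
`0 < tr(e^{−H})/tr(e^{M(H)}) ≤ 1`: that is, `0 < tr(e^{−H})` and
`tr(e^{−H}) ≤ tr(e^{M(H)})`. -/
theorem average_sign_at_beta_one_le_one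
    (D : ℕ) (hD : 0 < D) (H : Matrix (Fin D) (Fin D) ℂ) (hH : H.IsHermitian) :
    0 < (NormedSpace.exp (-H)).trace.re
      ∧ (NormedSpace.exp (-H)).trace.re
          ≤ (NormedSpace.exp (offAbsNegDiag H)).trace.re := by
  constructor
  · -- positivity: exp(-H) = E * E with E Hermitian invertible
    set K : Matrix (Fin D) (Fin D) ℂ := (-(1/2 : ℂ)) • H with hKdef
    have hKadd : K + K = -H := by
      rw [hKdef, ← add_smul]; norm_num
    have hKherm : K.IsHermitian := by
      rw [Matrix.IsHermitian, hKdef, Matrix.conjTranspose_smul, hH]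
      congr 1
      simp [Complex.ext_iff]
    set E : Matrix (Fin D) (Fin D) ℂ := NormedSpace.exp K with hEdef
    have hEherm : E.IsHermitian := hKherm.exp
    have hexp : NormedSpace.exp (-H) = E * E := by
      rw [← hKadd, Matrix.exp_add_of_commute _ _ (Commute.refl K)]
    have hEunit : IsUnit E := Matrix.isUnit_exp K
    have hEne : E ≠ 0 := by
      intro h0
      rw [h0, isUnit_zero_iff] at hEunit
      have := congr_fun (congr_fun hEunit ⟨0, hD⟩) ⟨0, hD⟩
      simp [Matrix.one_apply] at this
    have htr : (NormedSpace.exp (-H)).trace.re = ∑ i, ∑ k, Complex.normSq (E i k) := by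
      rw [hexp, Matrix.trace, Complex.re_sum]
      refine Finset.sum_congr rfl fun i _ => ?_
      rw [Matrix.diag_apply, Matrix.mul_apply, Complex.re_sum]
      refine Finset.sum_congr rfl fun k _ => ?_
      have : E k i = (starRingEnd ℂ) (E i k) := by
        conv_lhs => rw [← hEherm]
        simp [Matrix.conjTranspose_apply]
      rw [this, Complex.mul_conj]
      simp
    rw [htr]
    obtain ⟨i, k, hik⟩ : ∃ i k, E i k ≠ 0 := by
      by_contra hall
      push_neg at hall
      exact hEne (by ext i k; simpa using hall i k)
    refine Finset.sum_pos' (fun a _ => Finset.sum_nonneg fun b _ => Complex.normSq_nonneg _)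
      ⟨i, Finset.mem_univ i, Finset.sum_pos'
        (fun b _ => Complex.normSq_nonneg _)
        ⟨k, Finset.mem_univ k, Complex.normSq_pos.mpr hik⟩⟩
  · set c : ℝ := ∑ k, ‖H k k‖ with hc
    have h1 := trace_exp_shift c (-H)
    have h2 := trace_exp_shift c (offAbsNegDiag H)
    have hle := trace_exp_re_le _ _ (dom_shifted H hH)
    rw [h1, h2] at hle
    exact le_of_mul_le_mul_left hle (Real.exp_pos c)
end
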